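/- arXiv:1601.01101 — 8 statements merged into one kernel-verified Lean document; each statement's English description precedes it below -/
import Mathlib

section
/- Let R be a ring such that every quasi-injective right R-module is injective. Then R is a right noetherian right V-ring, and every semisimple right R-module is injective. -/
universe u v

open CategoryTheory

section ModuleDefs

variable (R : Type u) [Ring R]

/-- `N` is an essential submodule of `D` (inside the ambient module `M`). -/
def IsEssentialIn {M : Type v} [AddCommGroup M] [Module R M] (N D : Submodule R M) : Prop :=
  N ≤ D ∧ ∀ K : Submodule R M, K ≤ D → K ≠ ⊥ → N ⊓ K ≠ ⊥

/-- `N` is a direct summand of the ambient module. -/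
def IsSummand {M : Type v} [AddCommGroup M] [Module R M] (N : Submodule R M) : Prop :=
  ∃ N' : Submodule R M, IsCompl N N'

/-- C1 (extending) module: every submodule is essential in a direct summand. -/
def IsC1Module (M : Type v) [AddCommGroup M] [Module R M] : Prop :=
  ∀ N : Submodule R M, ∃ D : Submodule R M, IsSummand R D ∧ IsEssentialIn R N D

/-- C2 module: every submodule isomorphic to a direct summand is a direct summand. -/
def IsC2Module (M : Type v) [AddCommGroup M] [Module R M] : Prop :=
  ∀ A B : Submodule R M, IsSummand R B → Nonempty (A ≃ₗ[R] B) → IsSummand R A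

/-- C3 module: the sum of two direct summands intersecting trivially is a direct summand. -/
def IsC3Module (M : Type v) [AddCommGroup M] [Module R M] : Prop :=
  ∀ A B : Submodule R M, IsSummand R A → IsSummand R B → A ⊓ B = ⊥ → IsSummand R (A ⊔ B)

/-- Quasi-continuous module: C1 and C3. -/
def IsQuasiContinuousModule (M : Type v) [AddCommGroup M] [Module R M] : Prop :=
  IsC1Module R M ∧ IsC3Module R M

/-- Continuous module: C1 and C2. -/
def IsContinuousModule (M : Type v) [AddCommGroup M] [Module R M] : Prop :=
  IsC1Module R M ∧ IsC2Module R M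

/-- Quasi-injective module: every homomorphism from a submodule into the module
extends to an endomorphism. -/
def IsQuasiInjectiveModule (M : Type v) [AddCommGroup M] [Module R M] : Prop :=
  ∀ (N : Submodule R M) (f : N →ₗ[R] M), ∃ g : M →ₗ[R] M, ∀ x : N, g x = f x

end ModuleDefs

section ApproxDefs

variable (R : Type u) [Ring R]

/-- `g : M ⟶ E` is a `C`-preenvelope of `M`. -/
def IsPreenvelope (C : ModuleCat.{u} R → Prop) {M E : ModuleCat.{u} R} (g : M ⟶ E) : Prop :=
  C E ∧ ∀ E' : ModuleCat.{u} R, C E' → ∀ g' : M ⟶ E', ∃ α : E ⟶ E', g ≫ α = g'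

/-- A preenveloping class. -/
def Preenveloping (C : ModuleCat.{u} R → Prop) : Prop :=
  ∀ M : ModuleCat.{u} R, ∃ (E : ModuleCat.{u} R) (g : M ⟶ E), IsPreenvelope R C g

/-- `g : M ⟶ E` is a `C`-envelope of `M`. -/
def IsEnvelope (C : ModuleCat.{u} R → Prop) {M E : ModuleCat.{u} R} (g : M ⟶ E) : Prop :=
  IsPreenvelope R C g ∧ ∀ α : E ⟶ E, g ≫ α = g → IsIso α

/-- An enveloping class. -/
def Enveloping (C : ModuleCat.{u} R → Prop) : Prop :=
  ∀ M : ModuleCat.{u} R, ∃ (E : ModuleCat.{u} R) (g : M ⟶ E), IsEnvelope R C g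

/-- `g : X ⟶ M` is a `C`-precover of `M`. -/
def IsPrecover (C : ModuleCat.{u} R → Prop) {X M : ModuleCat.{u} R} (g : X ⟶ M) : Prop :=
  C X ∧ ∀ X' : ModuleCat.{u} R, C X' → ∀ g' : X' ⟶ M, ∃ α : X' ⟶ X, α ≫ g = g'

/-- A precovering class. -/
def Precovering (C : ModuleCat.{u} R → Prop) : Prop :=
  ∀ M : ModuleCat.{u} R, ∃ (X : ModuleCat.{u} R) (g : X ⟶ M), IsPrecover R C g

/-- `C` is closed under finite direct sums. -/
def ClosedUnderFiniteDirectSums (C : ModuleCat.{u} R → Prop) : Prop :=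
  ∀ (n : ℕ) (M : Fin n → ModuleCat.{u} R), (∀ i, C (M i)) →
    C (ModuleCat.of R (∀ i, M i))

/-- `C` is closed under isomorphisms. -/
def ClosedUnderIso (C : ModuleCat.{u} R → Prop) : Prop :=
  ∀ M N : ModuleCat.{u} R, (M ≅ N) → C M → C N

/-- `C` is closed under direct summands. -/
def ClosedUnderSummands (C : ModuleCat.{u} R → Prop) : Prop :=
  ∀ (M : ModuleCat.{u} R) (N : Submodule R M), IsSummand R N → C M → C (ModuleCat.of R N)

end ApproxDefs
section ExtraDefs

variable (R : Type u) [Ring R]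

/-- A uniform module: nonzero, and every nonzero submodule is essential. -/
def IsUniformModule (M : Type v) [AddCommGroup M] [Module R M] : Prop :=
  Nontrivial M ∧ ∀ N : Submodule R M, N ≠ ⊥ → IsEssentialIn R N (⊤ : Submodule R M)

/-- A module of composition length exactly `2`. -/
def HasCompositionLength2 (M : Type v) [AddCommGroup M] [Module R M] : Prop :=
  ∃ N : Submodule R M, IsSimpleModule R N ∧ IsSimpleModule R (M ⧸ N)

/-- A module of composition length at most `2`. -/
def CompositionLengthLE2 (M : Type v) [AddCommGroup M] [Module R M] : Prop :=
  ∃ N : Submodule R M, (IsSimpleModule R N ∨ N = ⊥) ∧ (IsSimpleModule R (M ⧸ N) ∨ N = ⊤)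

end ExtraDefs

/-!
Every submodule of a semisimple module is a direct summand, so semisimple modules are
quasi-injective and hence injective; in particular simple modules are injective. Then for an
ideal `J` and `a ∉ J`, an ideal `P ⊇ J` maximal with `a ∉ P` is a maximal ideal: the image of
`a` lies in every nonzero submodule of `R ⧸ P`, so it spans a simple essential submodule, which,
being injective, is a direct summand and hence all of `R ⧸ P`.

If `J₀ < J₁ < ⋯` had union `I`, pick `aₙ ∈ I \ Jₙ` and maximal `Pₙ ⊇ Jₙ` avoiding `aₙ`. Each
`x ∈ I` lies in some `J_k ⊆ Pₙ` for `n ≥ k`, so `x ↦ (x mod Pₙ)ₙ` maps `I` into the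
semisimple, hence injective, module `⨁ₙ R ⧸ Pₙ`. Its extension to `R` is multiplication by an
element of finite support, so `I ⊆ Pₙ` for some `n`, contradicting `aₙ ∉ Pₙ`.
-/

section VRing

variable {R : Type u} [Ring R] {M : Type v} [AddCommGroup M] [Module R M]

theorem isSummand_of_injective (N : Submodule R M) [Module.Injective R N] : IsSummand R N := by
  obtain ⟨π, hπ⟩ := Module.Injective.out N.subtype N.injective_subtype LinearMap.id
  exact ⟨_, LinearMap.isCompl_of_proj hπ⟩

theorem Submodule.Quotient.mk_mem_of_maximal_notMem {P : Submodule R M} {a : M}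
    (hP : Maximal (fun K : Submodule R M => a ∉ K) P) {p : Submodule R (M ⧸ P)} (hp : p ≠ ⊥) :
    Submodule.Quotient.mk a ∈ p := by
  by_contra ha
  have hcomap : p.comap P.mkQ = P :=
    hP.eq_of_ge (by simpa using ha) (Submodule.le_comap_mkQ P p)
  apply hp
  rw [← Submodule.map_comap_eq_of_surjective P.mkQ_surjective p, hcomap, Submodule.mkQ_map_self]

theorem isCoatom_of_maximal_notMem
    (hsimp : ∀ (N : Type v) [AddCommGroup N] [Module R N],
      IsSimpleModule R N → Module.Injective R N)
    {P : Submodule R M} {a : M} (hP : Maximal (fun K : Submodule R M => a ∉ K) P) :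
    IsCoatom P := by
  set b : M ⧸ P := Submodule.Quotient.mk a
  have hb : b ≠ 0 := fun h => hP.prop ((Submodule.Quotient.mk_eq_zero P).1 h)
  have hb_mem : ∀ p : Submodule R (M ⧸ P), p ≠ ⊥ → b ∈ p :=
    fun p hp => Submodule.Quotient.mk_mem_of_maximal_notMem hP hp
  set S := R ∙ b
  have hS : S ≠ ⊥ := by simpa [S] using hb
  have hS_atom : IsAtom S := ⟨hS, fun p hpS => by
    by_contra hp
    exact hpS.not_ge ((Submodule.span_singleton_le_iff_mem b p).2 (hb_mem p hp))⟩
  have hS_simple := isSimpleModule_iff_isAtom.2 hS_atom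
  have := hsimp S hS_simple
  obtain ⟨T, hST⟩ := isSummand_of_injective S
  have hT : T = ⊥ := by
    by_contra hT
    have : b ∈ S ⊓ T := ⟨Submodule.mem_span_singleton_self b, hb_mem T hT⟩
    rw [hST.inf_eq_bot, Submodule.mem_bot] at this
    exact hb this
  have hS_top : S = ⊤ := by simpa [hT] using hST.sup_eq_top
  rw [← isSimpleModule_iff_isCoatom]
  exact IsSimpleModule.congr ((LinearEquiv.ofEq _ _ hS_top).trans Submodule.topEquiv).symm

theorem exists_le_isCoatom_notMem
    (hsimp : ∀ (N : Type v) [AddCommGroup N] [Module R N],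
      IsSimpleModule R N → Module.Injective R N)
    {J : Submodule R M} {a : M} (ha : a ∉ J) : ∃ P, J ≤ P ∧ IsCoatom P ∧ a ∉ P := by
  obtain ⟨P, hJP, hP⟩ := zorn_le_nonempty₀ {K : Submodule R M | a ∉ K}
    (fun c hcs hc y hy => ⟨sSup c, fun hmem => by
      obtain ⟨p, hpc, hap⟩ := (Submodule.mem_sSup_of_directed ⟨y, hy⟩ hc.directedOn).1 hmem
      exact hcs hpc hap, fun z hz => le_sSup hz⟩) J ha
  exact ⟨P, hJP, isCoatom_of_maximal_notMem hsimp hP, hP.prop⟩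

end VRing

section DirectSum

variable {R : Type u} [Ring R] {M : Type v} [AddCommGroup M] [Module R M]
  {ι : Type*} {Q : ι → Type*} [∀ i, AddCommGroup (Q i)] [∀ i, Module R (Q i)]

noncomputable def LinearMap.toDFinsuppOfFinite (φ : ∀ i, M →ₗ[R] Q i)
    (hφ : ∀ x, {i | φ i x ≠ 0}.Finite) : M →ₗ[R] Π₀ i, Q i where
  toFun x := ⟨fun i => φ i x,
    Trunc.mk ⟨(hφ x).toFinset.1, fun _ => or_iff_not_imp_right.2 (hφ x).mem_toFinset.2⟩⟩
  map_add' x y := DFinsupp.ext fun i => map_add (φ i) x y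
  map_smul' c x := DFinsupp.ext fun i => map_smul (φ i) c x

theorem Module.Baer.finite_setOf_not_le_ker (hQ : Module.Baer R (Π₀ i, Q i))
    (φ : ∀ i, R →ₗ[R] Q i) (I : Ideal R) (hφ : ∀ x ∈ I, {i | φ i x ≠ 0}.Finite) :
    {i | ¬ I ≤ LinearMap.ker (φ i)}.Finite := by
  obtain ⟨g, hg⟩ :=
    hQ I (LinearMap.toDFinsuppOfFinite (fun i => φ i ∘ₗ I.subtype) fun x => hφ x x.2)
  refine (g 1).finite_support.subset fun i hi hg1 => hi fun x hx => ?_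
  have hφx : φ i x = g x i := (congrArg (· i) (hg x hx)).symm
  rw [LinearMap.mem_ker, hφx, ← mul_one x, ← smul_eq_mul, map_smul, DFinsupp.smul_apply, hg1,
    smul_zero]

end DirectSum

theorem isNoetherianRing_of_forall_isSemisimpleModule_injective {R : Type u} [Ring R]
    (hss : ∀ (M : Type u) [AddCommGroup M] [Module R M],
      IsSemisimpleModule R M → Module.Injective R M) :
    IsNoetherianRing R := by
  rw [isNoetherianRing_iff, isNoetherian_iff', wellFoundedGT_iff_monotone_chain_condition']
  by_contra! ⟨f, hf⟩
  set I := ⨆ n, f n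
  have hgap : ∀ n, ∃ a ∈ I, a ∉ f n := fun n => by
    obtain ⟨m, -, hlt⟩ := hf n
    obtain ⟨a, ha, han⟩ := SetLike.exists_of_lt hlt
    exact ⟨a, le_iSup f m ha, han⟩
  choose a haI haf using hgap
  choose P hfP hP haP using fun n =>
    exists_le_isCoatom_notMem (fun N _ _ _ => hss N inferInstance) (haf n)
  have := fun n => isSimpleModule_iff_isCoatom.2 (hP n)
  have hBaer : Module.Baer R (Π₀ n, R ⧸ P n) := Module.Baer.of_injective (hss _ inferInstance)
  have hfin : ∀ x ∈ I, {n | (P n).mkQ x ≠ 0}.Finite := fun x hx => by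
    obtain ⟨k, hk⟩ := (Submodule.mem_iSup_of_chain f x).1 hx
    refine (Set.finite_Iio k).subset fun n hn => ?_
    by_contra hkn
    exact hn ((Submodule.Quotient.mk_eq_zero _).2 (hfP n (f.monotone (not_lt.1 hkn) hk)))
  refine Set.infinite_univ ((hBaer.finite_setOf_not_le_ker (fun n => (P n).mkQ) I hfin).subset
    fun n _ hle => haP n ?_)
  simpa using hle (haI n)

theorem isQuasiInjectiveModule_of_isSemisimpleModule {R : Type u} [Ring R] (M : Type v)
    [AddCommGroup M] [Module R M] [IsSemisimpleModule R M] : IsQuasiInjectiveModule R M := by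
  intro N f
  obtain ⟨N', hN'⟩ := exists_isCompl N
  exact ⟨f ∘ₗ N.projectionOnto N' hN', fun x => by simp⟩

theorem stmt_1 (R : Type u) [Ring R]
    (h : ∀ (M : Type u) [AddCommGroup M] [Module R M],
      IsQuasiInjectiveModule R M → Module.Injective R M) :
    IsNoetherianRing R ∧
      (∀ (M : Type u) [AddCommGroup M] [Module R M],
        IsSimpleModule R M → Module.Injective R M) ∧
      (∀ (M : Type u) [AddCommGroup M] [Module R M],
        IsSemisimpleModule R M → Module.Injective R M) := by
  have hss : ∀ (M : Type u) [AddCommGroup M] [Module R M],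
      IsSemisimpleModule R M → Module.Injective R M :=
    fun M _ _ _ => h M (isQuasiInjectiveModule_of_isSemisimpleModule M)
  exact ⟨isNoetherianRing_of_forall_isSemisimpleModule_injective hss,
    fun M _ _ _ => hss M inferInstance, hss⟩
end

section
/- Let R be a ring such that every semisimple right R-module is injective. Then R is right noetherian. -/
universe u v

open CategoryTheory

/-!
Over such a ring every simple module is injective, so every proper submodule `N` lies in a maximal
one: if `P` is maximal among the submodules containing `N` and avoiding some `x ∉ N`, then the image
of `x` spans an injective simple submodule of `M ⧸ P` contained in every nonzero submodule, which
must therefore be all of `M ⧸ P`.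

If `I₀ < I₁ < ⋯` were a strictly increasing chain of ideals with union `I`, pick maximal
submodules `Kₙ ⊇ Iₙ` of `I`. Each `x ∈ I` lies in almost all `Kₙ`, so `x ↦ (x mod Kₙ)ₙ` maps `I`
into the semisimple, hence injective, module `⨁ₙ I ⧸ Kₙ`. Its extension to `R` is determined by
the image of `1`, which has finite support; hence almost all components of the map vanish,
contradicting `Kₙ ≠ I`.
-/

section

variable {R M : Type*} [Ring R] [AddCommGroup M] [Module R M]

theorem Submodule.exists_le_maximal_notMem {N : Submodule R M} {x : M} (hx : x ∉ N) :
    ∃ P : Submodule R M, N ≤ P ∧ Maximal (fun P : Submodule R M ↦ x ∉ P) P := by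
  refine zorn_le_nonempty₀ {P | x ∉ P} (fun c hc hchain P hP ↦ ⟨sSup c, ?_, fun _ ↦ le_sSup⟩) N hx
  intro hxc
  obtain ⟨Q, hQc, hxQ⟩ := (Submodule.mem_sSup_of_directed ⟨P, hP⟩ hchain.directedOn).1 hxc
  exact hc hQc hxQ

theorem Submodule.mkQ_mem_of_maximal_notMem {P : Submodule R M} {x : M}
    (hP : Maximal (fun P : Submodule R M ↦ x ∉ P) P) {W : Submodule R (M ⧸ P)} (hW : W ≠ ⊥) :
    P.mkQ x ∈ W := by
  by_contra hxW
  have hPW : P ≤ W.comap P.mkQ := by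
    simpa only [Submodule.ker_mkQ] using LinearMap.ker_le_comap (f := P.mkQ) (p := W)
  apply hW
  rw [← Submodule.map_comap_eq_of_surjective P.mkQ_surjective W, le_antisymm (hP.2 hxW hPW) hPW,
    Submodule.mkQ_map_self]

theorem Submodule.isAtom_span_singleton_of_forall_mem {x : M} (hx : x ≠ 0)
    (hmem : ∀ W : Submodule R M, W ≠ ⊥ → x ∈ W) : IsAtom (R ∙ x) := by
  refine ⟨by simpa using hx, fun W hW ↦ ?_⟩
  by_contra hW₀
  exact hW.not_ge ((Submodule.span_singleton_le_iff_mem x W).2 (hmem W hW₀))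

theorem IsSimpleModule.of_forall_mem_of_injective {x : M} (hx : x ≠ 0)
    (hmem : ∀ W : Submodule R M, W ≠ ⊥ → x ∈ W) [Module.Injective R (R ∙ x)] :
    IsSimpleModule R M := by
  obtain ⟨π, hπ⟩ := Module.Injective.out (R ∙ x).subtype (R ∙ x).injective_subtype LinearMap.id
  have hcompl : IsCompl (R ∙ x) (LinearMap.ker π) := LinearMap.isCompl_of_proj hπ
  have hker : LinearMap.ker π = ⊥ := by
    by_contra hker
    exact hx ((Submodule.disjoint_def.1 hcompl.disjoint) x
      (Submodule.mem_span_singleton_self x) (hmem _ hker))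
  have htop : (R ∙ x) = ⊤ := eq_top_of_isCompl_bot (hker ▸ hcompl)
  have hatom := Submodule.isAtom_span_singleton_of_forall_mem hx hmem
  exact (isSimpleModule_iff R M).2 (isSimpleOrder_iff_isAtom_top.2 (htop ▸ hatom))

theorem Submodule.exists_le_isCoatom_of_injective {M : Type v} [AddCommGroup M] [Module R M]
    (hinj : ∀ (S : Type v) [AddCommGroup S] [Module R S], IsSimpleModule R S → Module.Injective R S)
    {N : Submodule R M} (hN : N ≠ ⊤) : ∃ K : Submodule R M, N ≤ K ∧ IsCoatom K := by
  obtain ⟨x, -, hx⟩ := SetLike.exists_of_lt hN.lt_top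
  obtain ⟨P, hNP, hP⟩ := Submodule.exists_le_maximal_notMem hx
  have hx₀ : P.mkQ x ≠ 0 := by simpa using hP.1
  have hmem (W : Submodule R (M ⧸ P)) (hW : W ≠ ⊥) : P.mkQ x ∈ W :=
    Submodule.mkQ_mem_of_maximal_notMem hP hW
  have : Module.Injective R (R ∙ P.mkQ x) :=
    hinj _ (isSimpleModule_iff_isAtom.2 (Submodule.isAtom_span_singleton_of_forall_mem hx₀ hmem))
  exact ⟨P, hNP, isSimpleModule_iff_isCoatom.1 (.of_forall_mem_of_injective hx₀ hmem)⟩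

theorem DFinsupp.exists_linearMap_apply_eq {ι : Type*} {S : ι → Type*}
    [∀ i, AddCommGroup (S i)] [∀ i, Module R (S i)] (g : ∀ i, M →ₗ[R] S i)
    (hg : ∀ x, {i | g i x ≠ 0}.Finite) : ∃ φ : M →ₗ[R] Π₀ i, S i, ∀ x i, φ x i = g i x := by
  classical
  let φ (x : M) : Π₀ i, S i := DFinsupp.mk (hg x).toFinset fun i ↦ g i x
  have hφ (x : M) (i : ι) : φ x i = g i x := by
    by_cases hi : g i x = 0 <;> simp [φ, DFinsupp.mk_apply, hi]
  exact ⟨{ toFun := φ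
           map_add' := fun x y ↦ DFinsupp.ext fun i ↦ by simp [hφ]
           map_smul' := fun r x ↦ DFinsupp.ext fun i ↦ by simp [hφ] }, hφ⟩

theorem Module.Baer.finite_setOf_ne_zero {ι : Type*} {S : ι → Type*}
    [∀ i, AddCommGroup (S i)] [∀ i, Module R (S i)] (hbaer : Module.Baer R (Π₀ i, S i))
    (I : Ideal R) (g : ∀ i, I →ₗ[R] S i) (hg : ∀ x, {i | g i x ≠ 0}.Finite) :
    {i | g i ≠ 0}.Finite := by
  obtain ⟨φ, hφ⟩ := DFinsupp.exists_linearMap_apply_eq g hg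
  obtain ⟨ψ, hψ⟩ := hbaer I φ
  refine (ψ 1).finite_support.subset fun i hi ↦ ?_
  obtain ⟨⟨x, hxI⟩, hx⟩ := DFunLike.ne_iff.1 hi
  intro h1
  apply hx
  calc g i ⟨x, hxI⟩ = ψ x i := by rw [← hφ, hψ x hxI]
    _ = (x • ψ 1) i := by rw [← map_smul, smul_eq_mul, mul_one]
    _ = 0 := by rw [DFinsupp.smul_apply, h1, smul_zero]

end

theorem exists_iSup_le_of_forall_semisimple_injective {R : Type u} [Ring R]
    (h : ∀ (M : Type u) [AddCommGroup M] [Module R M],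
      IsSemisimpleModule R M → Module.Injective R M)
    (f : ℕ →o Ideal R) : ∃ n, ⨆ i, f i ≤ f n := by
  by_contra! hf
  set I := ⨆ i, f i
  have hJ (n : ℕ) : Submodule.comap I.subtype (f n) ≠ ⊤ := by
    rw [Ne, Submodule.comap_subtype_eq_top]
    exact hf n
  choose K hJK hK using fun n ↦
    Submodule.exists_le_isCoatom_of_injective (fun S _ _ _ ↦ h S inferInstance) (hJ n)
  have : ∀ n, IsSimpleModule R (I ⧸ K n) := fun n ↦ isSimpleModule_iff_isCoatom.2 (hK n)
  have hbaer : Module.Baer R (Π₀ n, I ⧸ K n) := .of_injective (h _ inferInstance)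
  have hfin := hbaer.finite_setOf_ne_zero I (fun n ↦ (K n).mkQ) fun ⟨x, hx⟩ ↦ by
    obtain ⟨m, hm⟩ := (Submodule.mem_iSup_of_directed _ f.monotone.directed_le).1 hx
    refine (Set.finite_Iio m).subset fun n hn ↦ Set.mem_Iio.2 (not_le.1 fun hmn ↦ hn ?_)
    exact (Submodule.Quotient.mk_eq_zero _).2 (hJK n (f.mono hmn hm))
  refine Set.infinite_univ (hfin.subset fun n _ ↦ ?_)
  simpa [← LinearMap.ker_eq_top] using (hK n).1

theorem stmt_3 (R : Type u) [Ring R]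
    (h : ∀ (M : Type u) [AddCommGroup M] [Module R M],
      IsSemisimpleModule R M → Module.Injective R M) :
    IsNoetherianRing R := by
  rw [isNoetherianRing_iff, ← monotone_stabilizes_iff_noetherian]
  intro f
  obtain ⟨n, hn⟩ := exists_iSup_le_of_forall_semisimple_injective h f
  exact ⟨n, fun m hm ↦ le_antisymm (f.mono hm) ((le_iSup f m).trans hn)⟩
end

section
/- Let R be a ring and let C denote any one of the following classes of right R-modules: the class of all C2-modules, the class of all C3-modules, the class of all quasi-continuous modules, the class of all continuous modules, or the class of all quasi-injective modules. If N is a module belonging to C that is not injective, then the module M = N ⊕ E(N) does not have a C-preenvelope. -/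
universe u v

open CategoryTheory

/-!
All five classes contain the injective modules and consist of C3-modules. If `g : N × E ⟶ X`
were a preenvelope, factoring both projections of `N × E` through `g` would make `N × E` a
retract of the C3-module `X`, hence itself a C3-module. There the summands `N × 0` and the graph
of `i` meet trivially, so their sum `N × i(N)` is a summand, and therefore `i(N)` is a summand
of `E`. Being also essential in `E`, it is all of `E`, so `N ≅ E` would be injective.
-/
section Summands

variable {R : Type*} [Ring R] {M X : Type*} [AddCommGroup M] [Module R M]
  [AddCommGroup X] [Module R X]

lemma isSummand_of_proj {K : Submodule R M} (f : M →ₗ[R] K) (hf : ∀ x : K, f x = x) :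
    IsSummand R K :=
  ⟨_, LinearMap.isCompl_of_proj hf⟩

section Retract

variable (s : M →ₗ[R] X) (r : X →ₗ[R] M)

lemma IsSummand.map_of_leftInverse (hrs : ∀ x, r (s x) = x) {K : Submodule R M}
    (hK : IsSummand R K) : IsSummand R (K.map s) := by
  obtain ⟨K', hKK'⟩ := hK
  have hmem : ∀ x, s (K.projection K' hKK' (r x)) ∈ K.map s :=
    fun x => Submodule.mem_map_of_mem (Submodule.projection_apply_mem hKK' _)
  refine isSummand_of_proj ((s ∘ₗ K.projection K' hKK' ∘ₗ r).codRestrict _ hmem) ?_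
  rintro ⟨_, k, hk, rfl⟩
  ext
  simp [hrs, Submodule.projection_apply_of_mem_left hKK' hk]

lemma isSummand_range_of_leftInverse (hrs : ∀ x, r (s x) = x) :
    IsSummand R (LinearMap.range s) := by
  simpa using IsSummand.map_of_leftInverse s r hrs (K := ⊤) ⟨⊥, isCompl_top_bot⟩

lemma isSummand_of_retract (hrs : ∀ x, r (s x) = x) {K : Submodule R M} {P : Submodule R X}
    (hP : IsSummand R P) (hsK : K.map s ≤ P) (hrP : P.map r ≤ K) : IsSummand R K := by
  obtain ⟨P', hPP'⟩ := hP
  have hmem : ∀ x, r (P.projection P' hPP' (s x)) ∈ K :=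
    fun x => hrP (Submodule.mem_map_of_mem (Submodule.projection_apply_mem hPP' _))
  refine isSummand_of_proj ((r ∘ₗ P.projection P' hPP' ∘ₗ s).codRestrict K hmem) fun k => ?_
  ext
  simp [hrs, Submodule.projection_apply_of_mem_left hPP' (hsK (Submodule.mem_map_of_mem k.2))]

end Retract

end Summands

lemma isCompl_sup_inf_of_le {α : Type*} [Lattice α] [BoundedOrder α] [IsModularLattice α]
    {a a' c y : α} (ha : IsCompl a a') (hc : IsCompl c y) (hca' : c ≤ a') :
    IsCompl (a ⊔ c) (a' ⊓ y) := by
  have hc_eq : (c ⊔ a) ⊓ a' = c := by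
    rw [sup_inf_assoc_of_le a hca', ha.inf_eq_bot, sup_bot_eq]
  have ha'_eq : c ⊔ y ⊓ a' = a' := by
    rw [← sup_inf_assoc_of_le y hca', hc.sup_eq_top, top_inf_eq]
  refine IsCompl.of_eq ?_ ?_
  · rw [← inf_assoc, sup_comm, hc_eq, hc.inf_eq_bot]
  · rw [sup_assoc, inf_comm, ha'_eq, ha.sup_eq_top]

section ModuleClasses

variable {R : Type*} [Ring R] {M : Type*} [AddCommGroup M] [Module R M]

lemma Module.Injective.isQuasiInjectiveModule (hM : Module.Injective R M) :
    IsQuasiInjectiveModule R M := fun P f =>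
  hM.out P.subtype Subtype.val_injective f

lemma IsQuasiInjectiveModule.isC2Module (hM : IsQuasiInjectiveModule R M) :
    IsC2Module R M := by
  rintro A B ⟨B', hBB'⟩ ⟨e⟩
  obtain ⟨g, hg⟩ := hM A (B.subtype ∘ₗ e.toLinearMap)
  refine isSummand_of_proj (e.symm.toLinearMap ∘ₗ B.projectionOnto B' hBB' ∘ₗ g) fun a => ?_
  simp [hg]

lemma IsC2Module.isC3Module (hM : IsC2Module R M) : IsC3Module R M := by
  rintro A B ⟨A', hAA'⟩ hB hAB
  set π := A'.projection A hAA'.symm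
  have hπ_inj : Function.Injective (π ∘ₗ B.subtype) := by
    rw [← LinearMap.ker_eq_bot, LinearMap.ker_comp, Submodule.ker_projection,
      ← Submodule.disjoint_iff_comap_eq_bot, disjoint_iff, inf_comm, hAB]
  set B₁ := LinearMap.range (π ∘ₗ B.subtype)
  obtain ⟨Y, hB₁Y⟩ : IsSummand R B₁ := hM B₁ B hB ⟨(LinearEquiv.ofInjective _ hπ_inj).symm⟩
  have hB₁A' : B₁ ≤ A' := by
    rintro _ ⟨b, rfl⟩
    exact Submodule.projection_apply_mem _ _
  -- `b` and `π b` differ by an element of `A`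
  have hsup : A ⊔ B = A ⊔ B₁ := by
    apply le_antisymm <;> refine sup_le le_sup_left fun x hx => ?_
    · have := Submodule.add_mem_sup (Submodule.sub_projection_mem hAA'.symm x)
        (LinearMap.mem_range_self (π ∘ₗ B.subtype) ⟨x, hx⟩)
      rwa [LinearMap.comp_apply, Submodule.subtype_apply, sub_add_cancel] at this
    · obtain ⟨b, rfl⟩ := hx
      have := Submodule.add_mem_sup
        (Submodule.neg_mem _ (Submodule.sub_projection_mem hAA'.symm b)) b.2
      rwa [neg_sub, sub_add_cancel] at this
  exact ⟨A' ⊓ Y, hsup ▸ isCompl_sup_inf_of_le hAA' hB₁Y hB₁A'⟩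

end ModuleClasses

section Essential

variable {R : Type*} [Ring R] {M : Type*} [AddCommGroup M] [Module R M]

namespace IsEssentialIn

lemma refl (S : Submodule R M) : IsEssentialIn R S S :=
  ⟨le_rfl, fun K hK hK0 => by rwa [inf_eq_right.2 hK]⟩

lemma eq_bot_of_inf_eq_bot {S T K : Submodule R M} (h : IsEssentialIn R S T) (hKT : K ≤ T)
    (hSK : S ⊓ K = ⊥) : K = ⊥ :=
  by_contra fun hK0 => h.2 K hKT hK0 hSK

lemma trans {S T U : Submodule R M} (hST : IsEssentialIn R S T) (hTU : IsEssentialIn R T U) :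
    IsEssentialIn R S U :=
  ⟨hST.1.trans hTU.1, fun K hKU hK0 hSK => hTU.2 K hKU hK0 <|
    hST.eq_bot_of_inf_eq_bot inf_le_left (le_bot_iff.1 (hSK ▸ inf_le_inf_left S inf_le_right))⟩

lemma map {M' : Type*} [AddCommGroup M'] [Module R M'] {f : M →ₗ[R] M'}
    (hf : Function.Injective f) {S T : Submodule R M} (h : IsEssentialIn R S T) :
    IsEssentialIn R (S.map f) (T.map f) := by
  refine ⟨Submodule.map_mono h.1, fun K hKT hK0 hSK => hK0 ?_⟩
  have hK : (K.comap f ⊓ T).map f = K := by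
    rw [Submodule.map_inf f hf, Submodule.map_comap_eq_of_le (hKT.trans (LinearMap.map_le_range)),
      inf_eq_left.2 hKT]
  have hK₀ : K.comap f ⊓ T = ⊥ := h.eq_bot_of_inf_eq_bot inf_le_right <| by
    apply Submodule.map_injective_of_injective hf
    rw [Submodule.map_inf f hf, hK, hSK, Submodule.map_bot]
  rw [← hK, hK₀, Submodule.map_bot]

end IsEssentialIn

lemma IsSummand.eq_top_of_isEssentialIn {L : Submodule R M} (hL : IsSummand R L)
    (hess : IsEssentialIn R L ⊤) : L = ⊤ := by
  obtain ⟨L', hLL'⟩ := hL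
  have hL' : L' = ⊥ := hess.eq_bot_of_inf_eq_bot le_top hLL'.inf_eq_bot
  exact eq_top_of_isCompl_bot (hL' ▸ hLL')

lemma exists_maximal_isEssentialIn (S : Submodule R M) : ∃ D, Maximal (IsEssentialIn R S) D := by
  have hchain_sSup : ∀ c : Set (Submodule R M), c ⊆ {D | IsEssentialIn R S D} →
      IsChain (· ≤ ·) c → c.Nonempty → IsEssentialIn R S (sSup c) := by
    rintro c hc hchain ⟨T, hT⟩
    refine ⟨(hc hT).1.trans (le_sSup hT), fun K hK hK0 => ?_⟩
    obtain ⟨x, hxK, hx0⟩ := (Submodule.ne_bot_iff K).1 hK0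
    obtain ⟨D, hD, hxD⟩ := (Submodule.mem_sSup_of_directed ⟨T, hT⟩ hchain.directedOn).1 (hK hxK)
    have hx : (R ∙ x) ≠ ⊥ := by simpa using hx0
    exact ne_bot_of_le_ne_bot ((hc hD).2 _ ((Submodule.span_singleton_le_iff_mem _ _).2 hxD) hx)
      (inf_le_inf_left S ((Submodule.span_singleton_le_iff_mem _ _).2 hxK))
  obtain ⟨D, -, hD⟩ := zorn_le_nonempty₀ {D | IsEssentialIn R S D}
    (fun c hc hchain T hT => ⟨sSup c, hchain_sSup c hc hchain ⟨T, hT⟩, fun _ => le_sSup⟩)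
    S (IsEssentialIn.refl S)
  exact ⟨D, hD⟩

lemma exists_maximal_disjoint (D : Submodule R M) : ∃ D', Maximal (Disjoint D) D' := by
  obtain ⟨D', -, hD'⟩ := zorn_le_nonempty₀ {P | Disjoint D P}
    (fun c hc hchain _ _ => ⟨sSup c, hchain.directedOn.disjoint_sSup_right.2 fun _ hP => hc hP,
      fun _ => le_sSup⟩) ⊥ disjoint_bot_right
  exact ⟨D', hD'⟩

lemma isEssentialIn_map_mkQ_of_maximal_disjoint {D D' : Submodule R M}
    (hD' : Maximal (Disjoint D) D') : IsEssentialIn R (D.map D'.mkQ) ⊤ := by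
  refine ⟨le_top, fun K _ hK0 hDK => hK0 ?_⟩
  have hle : D' ≤ K.comap D'.mkQ := by
    simpa only [Submodule.comap_bot, Submodule.ker_mkQ] using
      Submodule.comap_mono (f := D'.mkQ) (bot_le : ⊥ ≤ K)
  have hdisj : Disjoint D (K.comap D'.mkQ) := by
    refine Submodule.disjoint_def.2 fun x hxD hxK => Submodule.disjoint_def.1 hD'.prop x hxD ?_
    have : D'.mkQ x ∈ D.map D'.mkQ ⊓ K := ⟨Submodule.mem_map_of_mem hxD, hxK⟩
    rwa [hDK, Submodule.mem_bot, Submodule.mkQ_apply, Submodule.Quotient.mk_eq_zero] at this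
  apply Submodule.comap_injective_of_surjective D'.mkQ_surjective
  rw [← hD'.eq_of_le hdisj hle, Submodule.comap_bot, Submodule.ker_mkQ]

-- Extending `D ↪ M` along the essential embedding `D ↪ M ⧸ D'` gives an injective map whose
-- range is an essential extension of `D`, hence `D` itself; this yields a projection onto `D`.
lemma Module.Injective.isSummand_of_forall_isEssentialIn (hM : Module.Injective R M)
    {D : Submodule R M} (hD : ∀ F, IsEssentialIn R D F → F = D) : IsSummand R D := by
  obtain ⟨D', hD'⟩ := exists_maximal_disjoint D
  have hj : Function.Injective (D'.mkQ ∘ₗ D.subtype) := by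
    rw [← LinearMap.ker_eq_bot, LinearMap.ker_comp, Submodule.ker_mkQ,
      ← Submodule.disjoint_iff_comap_eq_bot]
    exact hD'.prop
  obtain ⟨h, hh⟩ := hM.out _ hj D.subtype
  have hess := isEssentialIn_map_mkQ_of_maximal_disjoint hD'
  have h_inj : Function.Injective h := by
    rw [← LinearMap.ker_eq_bot]
    refine hess.eq_bot_of_inf_eq_bot le_top (eq_bot_iff.2 ?_)
    rintro _ ⟨⟨d, hd, rfl⟩, hker⟩
    have hd0 : d = 0 := (hh ⟨d, hd⟩).symm.trans hker
    simp [hd0]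
  have hD_map : (D.map D'.mkQ).map h = D := by
    have hcomp : h ∘ₗ D'.mkQ ∘ₗ D.subtype = D.subtype := LinearMap.ext hh
    rw [← Submodule.range_subtype D, ← LinearMap.range_comp, ← LinearMap.range_comp, hcomp]
  have h_range : LinearMap.range h = D := by
    have := hess.map h_inj
    rw [hD_map, Submodule.map_top] at this
    exact hD _ this
  exact isSummand_of_proj ((h ∘ₗ D'.mkQ).codRestrict D fun x => h_range ▸ ⟨_, rfl⟩)
    fun d => Subtype.ext (hh d)

lemma Module.Injective.isC1Module (hM : Module.Injective R M) : IsC1Module R M := by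
  intro S
  obtain ⟨D, hD⟩ := exists_maximal_isEssentialIn S
  refine ⟨D, hM.isSummand_of_forall_isEssentialIn fun F hDF => ?_, hD.prop⟩
  exact (hD.eq_of_le (hD.prop.trans hDF) hDF.1).symm

end Essential

section C3

variable {R : Type*} [Ring R] {M X : Type*} [AddCommGroup M] [Module R M]
  [AddCommGroup X] [Module R X]

lemma IsC3Module.of_retract (hX : IsC3Module R X) (s : M →ₗ[R] X) (r : X →ₗ[R] M)
    (hrs : ∀ x, r (s x) = x) : IsC3Module R M := by
  intro A B hA hB hAB
  have hs : Function.Injective s := Function.LeftInverse.injective hrs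
  have hAB_map : IsSummand R ((A ⊔ B).map s) := by
    rw [Submodule.map_sup]
    refine hX _ _ (hA.map_of_leftInverse s r hrs) (hB.map_of_leftInverse s r hrs) ?_
    rw [← Submodule.map_inf s hs, hAB, Submodule.map_bot]
  refine isSummand_of_retract s r hrs hAB_map le_rfl ?_
  rintro _ ⟨_, ⟨x, hx, rfl⟩, rfl⟩
  rwa [hrs]

lemma surjective_of_isC3Module_prod {N E : Type*} [AddCommGroup N] [Module R N]
    [AddCommGroup E] [Module R E] (h : IsC3Module R (N × E)) {i : N →ₗ[R] E}
    (hi : Function.Injective i) (hess : IsEssentialIn R (LinearMap.range i) ⊤) :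
    Function.Surjective i := by
  set graph := LinearMap.id.prod i
  have hN := isSummand_range_of_leftInverse (LinearMap.inl R N E) (LinearMap.fst R N E)
    fun _ => rfl
  have hgraph := isSummand_range_of_leftInverse graph (LinearMap.fst R N E) fun _ => rfl
  have hdisj : LinearMap.range (LinearMap.inl R N E) ⊓ LinearMap.range graph = ⊥ := by
    rw [eq_bot_iff]
    rintro _ ⟨⟨n, rfl⟩, m, hm⟩
    obtain ⟨rfl, him⟩ := Prod.ext_iff.1 hm
    simp [hi (him.trans (map_zero i).symm)]
  have hsum := h _ _ hN hgraph hdisj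
  have hrange : IsSummand R (LinearMap.range i) := by
    refine isSummand_of_retract (LinearMap.inr R N E) (LinearMap.snd R N E) (fun _ => rfl) hsum
      ?_ ?_
    · rintro _ ⟨_, ⟨n, rfl⟩, rfl⟩
      convert Submodule.add_mem_sup (LinearMap.mem_range_self (LinearMap.inl R N E) (-n))
        (LinearMap.mem_range_self graph n) using 1
      simp [graph]
    · rw [Submodule.map_sup, ← LinearMap.range_comp, ← LinearMap.range_comp,
        LinearMap.snd_comp_inl, LinearMap.snd_prod, LinearMap.range_zero, bot_sup_eq]
  exact LinearMap.range_eq_top.1 (hrange.eq_top_of_isEssentialIn hess)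

end C3

theorem stmt_4 (R : Type u) [Ring R] (C : ModuleCat.{u} R → Prop)
    (hC : C = (fun M : ModuleCat.{u} R => IsC2Module R M) ∨
      C = (fun M : ModuleCat.{u} R => IsC3Module R M) ∨
      C = (fun M : ModuleCat.{u} R => IsQuasiContinuousModule R M) ∨
      C = (fun M : ModuleCat.{u} R => IsContinuousModule R M) ∨
      C = (fun M : ModuleCat.{u} R => IsQuasiInjectiveModule R M))
    (N E : ModuleCat.{u} R) (hN : C N) (hNinj : ¬ Module.Injective R N)
    (hEinj : Module.Injective R E) (i : N →ₗ[R] E) (hi : Function.Injective i)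
    (hess : IsEssentialIn R (LinearMap.range i) (⊤ : Submodule R E)) :
    ¬ ∃ (X : ModuleCat.{u} R) (g : ModuleCat.of R (↑N × ↑E) ⟶ X),
        IsPreenvelope R C g := by
  rintro ⟨X, g, hX, hfactor⟩
  have hE2 := hEinj.isQuasiInjectiveModule.isC2Module
  obtain ⟨hX3, hE⟩ : IsC3Module R X ∧ C E := by
    rcases hC with rfl | rfl | rfl | rfl | rfl
    exacts [⟨IsC2Module.isC3Module hX, hE2⟩, ⟨hX, hE2.isC3Module⟩,
      ⟨hX.2, hEinj.isC1Module, hE2.isC3Module⟩, ⟨hX.2.isC3Module, hEinj.isC1Module, hE2⟩,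
      ⟨(IsQuasiInjectiveModule.isC2Module hX).isC3Module, hEinj.isQuasiInjectiveModule⟩]
  obtain ⟨α, hα⟩ := hfactor N hN (ModuleCat.ofHom (LinearMap.fst R N E))
  obtain ⟨β, hβ⟩ := hfactor E hE (ModuleCat.ofHom (LinearMap.snd R N E))
  have hNE : IsC3Module R (N × E) := hX3.of_retract g.hom (α.hom.prod β.hom)
    fun p => Prod.ext (LinearMap.congr_fun (congrArg ModuleCat.Hom.hom hα) p)
      (LinearMap.congr_fun (congrArg ModuleCat.Hom.hom hβ) p)
  have hi_bij : Function.Bijective i := ⟨hi, surjective_of_isC3Module_prod hNE hi hess⟩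
  exact hNinj (Module.Baer.injective
    ((Module.Baer.of_injective hEinj).of_equiv (LinearEquiv.ofBijective i hi_bij).symm))
end

section
/- Let R be a ring and C a class of right R-modules closed under isomorphisms and direct summands. If C is a preenveloping class, then C is closed under arbitrary direct products. -/
universe u v

open CategoryTheory

/- A preenvelope `g` of `∏ Mᵢ` with all `Mᵢ ∈ C` is a split monomorphism: each projection
factors through `g`, and the factorizations assemble into a retraction. So `∏ Mᵢ` is a direct
summand of its preenvelope, which lies in `C`. -/

section

variable {R : Type u} [Ring R]

theorem LinearMap.isSummand_range_of_leftInverse {M E : Type v} [AddCommGroup M] [Module R M]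
    [AddCommGroup E] [Module R E] {f : M →ₗ[R] E} {r : E →ₗ[R] M}
    (h : Function.LeftInverse r f) : IsSummand R (LinearMap.range f) := by
  refine ⟨_, LinearMap.isCompl_of_proj (f := f.rangeRestrict ∘ₗ r) ?_⟩
  rintro ⟨_, m, rfl⟩
  simp only [LinearMap.comp_apply, LinearMap.rangeRestrict, h m]
  rfl

theorem ClosedUnderSummands.mem_of_retract {C : ModuleCat.{u} R → Prop}
    (hsmd : ClosedUnderSummands R C) (hiso : ClosedUnderIso R C) {M E : ModuleCat.{u} R}
    (h : Retract M E) (hE : C E) : C M := by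
  have hleft : Function.LeftInverse h.r h.i := fun m => congr($(h.retract).hom m)
  exact hiso _ _ (LinearEquiv.ofLeftInverse hleft).symm.toModuleIso
    (hsmd E _ (LinearMap.isSummand_range_of_leftInverse hleft) hE)

theorem IsPreenvelope.exists_retraction_of_pi {C : ModuleCat.{u} R → Prop} {ι : Type u}
    {M : ι → ModuleCat.{u} R} (hM : ∀ i, C (M i)) {E : ModuleCat.{u} R}
    {g : ModuleCat.of R (∀ i, M i) ⟶ E} (hg : IsPreenvelope R C g) :
    ∃ r : E ⟶ ModuleCat.of R (∀ i, M i), g ≫ r = 𝟙 _ := by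
  choose a ha using fun i => hg.2 (M i) (hM i) (ModuleCat.ofHom (LinearMap.proj i))
  refine ⟨ModuleCat.ofHom (LinearMap.pi fun i => (a i).hom), ?_⟩
  ext x i
  exact congr($(ha i).hom x)

end

theorem stmt_5 (R : Type u) [Ring R] (C : ModuleCat.{u} R → Prop)
    (hiso : ClosedUnderIso R C) (hsmd : ClosedUnderSummands R C)
    (henv : Preenveloping R C) :
    ∀ (ι : Type u) (M : ι → ModuleCat.{u} R), (∀ i, C (M i)) →
      C (ModuleCat.of R (∀ i, M i)) := by
  intro ι M hM
  obtain ⟨E, g, hg⟩ := henv (ModuleCat.of R (∀ i, M i))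
  obtain ⟨r, hr⟩ := hg.exists_retraction_of_pi hM
  exact hsmd.mem_of_retract hiso ⟨g, r, hr⟩ hg.1
end

section
/- A ring R is right noetherian if and only if every direct sum of any family of injective right R-modules is a C3-module. -/
universe u v

open CategoryTheory

/-!
Over a noetherian ring every ideal is finitely generated, so a map from an ideal into a direct
sum of injectives lands in a finite subsum and extends by Baer's criterion: direct sums of
injectives are injective (Bass–Papp). Injective modules are C3, since summands and finite sums
of injectives are injective and injective submodules are summands.

Conversely, embed a direct sum `M` of injectives into an injective `Q` by `f`. Then `M × Q` is
again such a direct sum, hence C3, and the graph of `f` shows that `M ≅ f(M)` is a summand of `Q`,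
so `M` is injective. Applied to `⨁ₙ E(R/Iₙ)` for an ascending chain of ideals `Iₙ` with union `I`,
extend `x ↦ (x mod Iₙ)ₙ` from `I` to `R`: the finite support of the image of `1` bounds the chain.
-/

universe w

open DirectSum

variable {R : Type u} [Ring R]

namespace Module.Injective

variable {M N : Type v} [AddCommGroup M] [Module R M] [AddCommGroup N] [Module R N]

theorem of_retract (i : N →ₗ[R] M) (r : M →ₗ[R] N) (hri : ∀ n, r (i n) = n)
    [Module.Injective R M] : Module.Injective R N :=
  ⟨fun _ _ _ _ _ _ f hf g => by
    obtain ⟨h, hh⟩ := Module.Injective.out f hf (i ∘ₗ g)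
    exact ⟨r ∘ₗ h, fun x => by simp [hh x, hri]⟩⟩

theorem of_linearEquiv (e : M ≃ₗ[R] N) [Module.Injective R M] : Module.Injective R N :=
  of_retract e.symm.toLinearMap e.toLinearMap e.apply_symm_apply

instance prod [Module.Injective R M] [Module.Injective R N] : Module.Injective R (M × N) :=
  ⟨fun _ _ _ _ _ _ f hf g => by
    obtain ⟨h₁, hh₁⟩ := Module.Injective.out f hf (LinearMap.fst R M N ∘ₗ g)
    obtain ⟨h₂, hh₂⟩ := Module.Injective.out f hf (LinearMap.snd R M N ∘ₗ g)
    exact ⟨h₁.prod h₂, fun x => Prod.ext (hh₁ x) (hh₂ x)⟩⟩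

theorem of_isCompl [Module.Injective R M] {A B : Submodule R M} (h : IsCompl A B) :
    Module.Injective R A :=
  of_retract A.subtype (A.projectionOnto B h) (Submodule.projectionOnto_apply_left h)

theorem exists_isCompl {A : Submodule R M} [Module.Injective R A] : ∃ B, IsCompl A B := by
  obtain ⟨r, hr⟩ := Module.Injective.out A.subtype A.injective_subtype LinearMap.id
  exact ⟨_, LinearMap.isCompl_of_proj hr⟩

theorem isC3Module [Module.Injective R M] : IsC3Module R M := by
  rintro A B ⟨A', hA⟩ ⟨B', hB⟩ hAB
  have := Module.Injective.of_isCompl hA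
  have := Module.Injective.of_isCompl hB
  have hker : LinearMap.ker (A.subtype.coprod B.subtype) = ⊥ := by
    rw [LinearMap.ker_coprod_of_disjoint_range] <;> simp [disjoint_iff, hAB]
  have hrange : LinearMap.range (A.subtype.coprod B.subtype) = A ⊔ B := by
    simp [LinearMap.range_coprod]
  have := Module.Injective.of_linearEquiv
    ((LinearEquiv.ofInjective _ (LinearMap.ker_eq_bot.mp hker)).trans
      (LinearEquiv.ofEq _ _ hrange))
  exact exists_isCompl

end Module.Injective

namespace DirectSum

variable {ι : Type w} [DecidableEq ι] {β : ι → Type v} [∀ i, AddCommGroup (β i)]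
  [∀ i, Module R (β i)]

theorem exists_finset_apply_eq_zero {N : Type*} [AddCommGroup N] [Module R N]
    [Module.Finite R N] (g : N →ₗ[R] ⨁ i, β i) :
    ∃ S : Finset ι, ∀ x, ∀ i ∉ S, g x i = 0 := by
  classical
  obtain ⟨t, ht⟩ := Module.Finite.fg_top (R := R) (M := N)
  let S := t.biUnion fun y => DFinsupp.support (g y)
  have hle : ⊤ ≤ ⨅ i ∉ S, LinearMap.ker (component R ι β i ∘ₗ g) := by
    refine ht ▸ Submodule.span_le.mpr fun y hy => ?_
    simp only [SetLike.mem_coe, Submodule.mem_iInf, LinearMap.mem_ker, LinearMap.comp_apply]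
    exact fun i hi =>
      DFinsupp.notMem_support_iff.mp fun h => hi (Finset.mem_biUnion.mpr ⟨y, hy, h⟩)
  refine ⟨S, fun x => ?_⟩
  have hx := hle (Submodule.mem_top (x := x))
  simp only [Submodule.mem_iInf, LinearMap.mem_ker, LinearMap.comp_apply] at hx
  exact hx

theorem sum_lof_eq_self {S : Finset ι} {x : ⨁ i, β i} (hx : ∀ i ∉ S, x i = 0) :
    ∑ i ∈ S, lof R ι β i (x i) = x := by
  ext j
  by_cases hj : j ∈ S
  · simp [lof_eq_of, of_apply, hj]
  · simp [lof_eq_of, of_apply, hj, hx j hj]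

theorem injective_of_isNoetherianRing [IsNoetherianRing R] [Small.{v} R]
    [∀ i, Module.Injective R (β i)] : Module.Injective R (⨁ i, β i) := by
  refine Module.Baer.injective fun I g => ?_
  obtain ⟨S, hS⟩ := exists_finset_apply_eq_zero g
  choose h hh using fun i =>
    Module.Baer.of_injective (inferInstanceAs (Module.Injective R (β i))) I
      (component R ι β i ∘ₗ g)
  refine ⟨∑ i ∈ S, lof R ι β i ∘ₗ h i, fun x hx => ?_⟩
  simp only [LinearMap.coe_sum, Finset.sum_apply, LinearMap.comp_apply, hh _ x hx]
  exact sum_lof_eq_self (hS _)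

end DirectSum

theorem IsSummand.map_orderIso {M N : Type v} [AddCommGroup M] [Module R M] [AddCommGroup N]
    [Module R N] (o : Submodule R M ≃o Submodule R N) {A : Submodule R M} (hA : IsSummand R A) :
    IsSummand R (o A) :=
  let ⟨_, h⟩ := hA
  ⟨_, o.isCompl h⟩

theorem IsC3Module.of_linearEquiv {M N : Type v} [AddCommGroup M] [Module R M] [AddCommGroup N]
    [Module R N] (e : M ≃ₗ[R] N) (h : IsC3Module R M) : IsC3Module R N := by
  intro A B hA hB hAB
  let o := Submodule.orderIsoMapComap e
  have := h _ _ (IsSummand.map_orderIso o.symm hA) (IsSummand.map_orderIso o.symm hB)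
    (by rw [← o.symm.map_inf, hAB, o.symm.map_bot])
  rw [← o.symm.map_sup] at this
  simpa using IsSummand.map_orderIso o this

theorem IsCompl.isCompl_of_sup_left {α : Type*} [Lattice α] [BoundedOrder α]
    [IsModularLattice α] {a b c : α} (h : IsCompl (a ⊔ b) c) (hab : Disjoint a b) :
    IsCompl b (a ⊔ c) :=
  ⟨hab.symm.disjoint_sup_right_of_disjoint_sup_left (sup_comm a b ▸ h.disjoint),
    codisjoint_iff.mpr (by rw [← sup_assoc, sup_comm b a, h.sup_eq_top])⟩

theorem LinearMap.isCompl_graph_ker_fst {M Q : Type v} [AddCommGroup M] [Module R M]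
    [AddCommGroup Q] [Module R Q] (f : M →ₗ[R] Q) :
    IsCompl f.graph (LinearMap.ker (LinearMap.fst R M Q)) := by
  refine ⟨Submodule.disjoint_def.mpr fun x hx h1 => ?_,
    codisjoint_iff.mpr (eq_top_iff.mpr fun x _ => ?_)⟩
  · simp_all [Prod.ext_iff]
  · exact Submodule.mem_sup.mpr ⟨(x.1, f x.1), rfl, (0, x.2 - f x.1), by simp, by simp⟩

/-- `M × 0` and the graph of `f` are summands meeting trivially, and their sum is
`M × 0 ⊕ 0 × f(M)`; so C3 makes `0 × f(M)` a summand, hence a retract of the injective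
`0 × Q`. -/
theorem Module.Injective.of_isC3Module_prod {M Q : Type v} [AddCommGroup M] [Module R M]
    [AddCommGroup Q] [Module R Q] [Module.Injective R Q] (hC3 : IsC3Module R (M × Q))
    (f : M →ₗ[R] Q) (hf : Function.Injective f) : Module.Injective R M := by
  let A := LinearMap.ker (LinearMap.snd R M Q)
  let Φ := LinearMap.range (LinearMap.inr R M Q ∘ₗ f)
  have hAQ : IsCompl A (LinearMap.ker (LinearMap.fst R M Q)) := by
    simpa [LinearMap.range_inl, LinearMap.range_inr] using LinearMap.isCompl_range_inl_inr
  have hA_graph : A ⊓ f.graph = ⊥ := by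
    refine (Submodule.disjoint_def.mpr fun x h1 h2 => ?_).eq_bot
    have hx2 : x.2 = 0 := LinearMap.mem_ker.mp h1
    have hx1 : x.1 = 0 := hf (by rw [← h2, hx2, map_zero])
    exact Prod.ext hx1 hx2
  have hsup : A ⊔ f.graph = A ⊔ Φ := by
    refine le_antisymm (sup_le le_sup_left fun x hx => ?_) (sup_le le_sup_left ?_)
    · exact Submodule.mem_sup.mpr
        ⟨(x.1, 0), LinearMap.mem_ker.mpr rfl, (0, f x.1), ⟨x.1, rfl⟩,
          by simp_all [Prod.ext_iff]⟩
    · rintro _ ⟨m, rfl⟩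
      exact Submodule.mem_sup.mpr ⟨(-m, 0), LinearMap.mem_ker.mpr rfl, (m, f m), rfl, by simp⟩
  have hAΦ : Disjoint A Φ := by
    refine Submodule.disjoint_def.mpr fun x h1 hx => ?_
    obtain ⟨m, rfl⟩ := hx
    have hm : m = 0 := hf (by rw [map_zero]; exact LinearMap.mem_ker.mp h1)
    simp [hm]
  obtain ⟨C, hC⟩ := hC3 A f.graph ⟨_, hAQ⟩ ⟨_, f.isCompl_graph_ker_fst⟩ hA_graph
  have hΦ : IsCompl Φ (A ⊔ C) := (hsup ▸ hC).isCompl_of_sup_left hAΦ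
  have hinr_f : Function.Injective (LinearMap.inr R M Q ∘ₗ f) := LinearMap.inr_injective.comp hf
  let e := LinearEquiv.ofInjective _ hinr_f
  refine of_retract f
    (e.symm.toLinearMap ∘ₗ Φ.projectionOnto (A ⊔ C) hΦ ∘ₗ LinearMap.inr R M Q) fun m => ?_
  simp only [LinearMap.comp_apply, LinearEquiv.coe_coe]
  rw [e.symm_apply_eq]
  exact Submodule.projectionOnto_apply_left hΦ ⟨_, m, rfl⟩

theorem Module.exists_injective_embedding [Small.{v} R] (M : Type v) [AddCommGroup M]
    [Module R M] :
    ∃ (J : Type v) (_ : AddCommGroup J) (_ : Module R J) (_ : Module.Injective R J)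
      (f : M →ₗ[R] J), Function.Injective f := by
  let f := CategoryTheory.Injective.ι (ModuleCat.of R M)
  exact ⟨_, _, _, @Module.injective_module_of_injective_object R _ _ _ _
    (CategoryTheory.Injective.injective_under _), f.hom,
    (ModuleCat.mono_iff_injective f).mp inferInstance⟩

theorem DirectSum.injective_of_forall_isC3Module
    (h : ∀ (ι : Type u) (E : ι → ModuleCat.{u} R), (∀ i, Module.Injective R (E i)) →
      IsC3Module R (⨁ i, E i))
    {ι : Type u} (E : ι → ModuleCat.{u} R) (hE : ∀ i, Module.Injective R (E i)) :
    Module.Injective R (⨁ i, E i) := by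
  obtain ⟨J, _, _, hJ, g, hg⟩ := Module.exists_injective_embedding (R := R) (⨁ i, E i)
  let F : Option ι → ModuleCat.{u} R := fun o => o.elim (ModuleCat.of R J) E
  have hF : ∀ o, Module.Injective R (F o) := fun o => o.rec hJ hE
  have hC3 : IsC3Module R ((⨁ i, E i) × J) := (h _ F hF).of_linearEquiv
    ((DirectSum.lequivProdDirectSum R (α := fun o => F o)).trans (LinearEquiv.prodComm R _ _))
  exact Module.Injective.of_isC3Module_prod hC3 g hg

namespace DFinsupp

variable {ι : Type*} {β : ι → Type*} [∀ i, AddCommGroup (β i)] [∀ i, Module R (β i)]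
  {N : Type*} [AddCommGroup N] [Module R N]

noncomputable def linearMapOfFinite (c : ∀ i, N →ₗ[R] β i)
    (hc : ∀ x, {i | c i x ≠ 0}.Finite) :
    N →ₗ[R] Π₀ i, β i where
  toFun x := ⟨fun i => c i x, Trunc.mk ⟨(hc x).toFinset.val, fun i => by
    by_cases h : c i x = 0
    · exact Or.inr h
    · exact Or.inl ((hc x).mem_toFinset.mpr h)⟩⟩
  map_add' x y := by ext i; simp
  map_smul' r x := by ext i; simp

theorem exists_forall_le_eq_zero {β : ULift.{w} ℕ → Type*} [∀ n, Zero (β n)]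
    (x : Π₀ n, β n) :
    ∃ N : ℕ, ∀ n : ULift.{w} ℕ, N ≤ n.down → x n = 0 := by
  obtain ⟨B, hB⟩ := (x.finite_support.image ULift.down).bddAbove
  exact ⟨B + 1, fun n hn => by_contra fun h => by
    have := hB ⟨n, h, rfl⟩
    omega⟩

end DFinsupp

theorem isNoetherianRing_of_injective_directSum
    (h : ∀ (β : ULift.{u} ℕ → Type u) [∀ n, AddCommGroup (β n)] [∀ n, Module R (β n)],
      (∀ n, Module.Injective R (β n)) → Module.Injective R (⨁ n, β n)) :
    IsNoetherianRing R := by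
  rw [isNoetherianRing_iff, ← monotone_stabilizes_iff_noetherian]
  intro f
  choose J _ _ hJ e he using fun n => Module.exists_injective_embedding (R := R) (R ⧸ f n)
  let I := ⨆ n, f n
  let c : ∀ n : ULift.{u} ℕ, I →ₗ[R] J n.down :=
    fun n => e n.down ∘ₗ (f n.down).mkQ ∘ₗ I.subtype
  have hc : ∀ x, {n | c n x ≠ 0}.Finite := by
    rintro ⟨x, hx⟩
    obtain ⟨N, hN⟩ := (Submodule.mem_iSup_of_directed f f.monotone.directed_le).mp hx
    refine ((Set.finite_Iio N).preimage ULift.down_injective.injOn).subset fun n hn => ?_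
    by_contra hlt
    refine hn ?_
    simp only [c, LinearMap.comp_apply, Submodule.subtype_apply, Submodule.mkQ_apply]
    rw [(Submodule.Quotient.mk_eq_zero _).mpr (f.monotone (not_lt.mp hlt) hN), map_zero]
  obtain ⟨G, hG⟩ := Module.Baer.of_injective (h (fun n => J n.down) fun n => hJ n.down) I
    (DFinsupp.linearMapOfFinite c hc)
  obtain ⟨N, hN⟩ := DFinsupp.exists_forall_le_eq_zero (G 1)
  have hI : I ≤ f N := fun x hx => by
    have hx0 : e N ((f N).mkQ x) = 0 :=
      calc e N ((f N).mkQ x) = DFinsupp.linearMapOfFinite c hc ⟨x, hx⟩ ⟨N⟩ := rfl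
        _ = (x • G 1) ⟨N⟩ := by rw [← hG x hx, ← map_smul, smul_eq_mul, mul_one]
        _ = 0 := by rw [DFinsupp.smul_apply, hN _ le_rfl, smul_zero]
    rw [← map_zero (e N)] at hx0
    exact (Submodule.Quotient.mk_eq_zero _).mp (he N hx0)
  exact ⟨N, fun m hm => le_antisymm (f.monotone hm) ((le_iSup f m).trans hI)⟩

open DirectSum in
theorem stmt_7 (R : Type u) [Ring R] :
    IsNoetherianRing R ↔
      ∀ (ι : Type u) (E : ι → ModuleCat.{u} R), (∀ i, Module.Injective R (E i)) →
        IsC3Module R (⨁ i, E i) := by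
  refine ⟨fun _ ι E _ => ?_,
    fun h => isNoetherianRing_of_injective_directSum fun β _ _ hβ => ?_⟩
  · classical
    exact (DirectSum.injective_of_isNoetherianRing (β := fun i => E i)).isC3Module
  · exact DirectSum.injective_of_forall_isC3Module h (fun n => ModuleCat.of R (β n)) hβ
end

section
/- Let R be a commutative ring that decomposes into a finite ring direct product R = R_0 × ... × R_{m-1}, where each R_i is a local artinian principal ideal ring whose composition length as a module over itself is at most 2. Then every R-module is a C1-module. -/
universe u v

open CategoryTheory

/-!
Each factor `Rᵢ` has maximal ideal `(aᵢ)` with `aᵢ² = 0`, so `t := (aᵢ)ᵢ` satisfies `t² = 0` and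
`R/(t)` is a finite product of fields. Then every submodule of `ker t` has a complement inside any
larger submodule of `ker t`, and every nonzero submodule of `M` meets `ker t`.

The key construction lifts a submodule `P ≤ tM` to some `X` with `tX = P = X ∩ ker t`: by Zorn,
adding one cyclic lift at a time; a single element `p = t x₀` has the lift `x₀ - u x₀`, where `u`
lies in the annihilator of `p` and maps to the idempotent generator of its image in `R/(t)`.
Given `N`, adding to `N` such a lift of a complement of `tN` in `N ∩ tM` gives `D ⊇ N` with
`D ∩ ker t ⊆ N`, so that `N` is essential in `D`, and with `D ∩ tM = tD`. The latter makes `D` a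
direct summand: a complement is a lift of a complement `W` of `D ∩ tM` in `tM`, plus a complement
of `(D ∩ ker t) ⊕ W` in `ker t`.
-/

theorem Submodule.sup_inf_ker_eq_of_disjoint_map {R M M₂ : Type*} [Ring R] [AddCommGroup M]
    [Module R M] [AddCommGroup M₂] [Module R M₂] (f : M →ₗ[R] M₂) {X Y : Submodule R M}
    (h : Disjoint (X.map f) (Y.map f)) :
    (X ⊔ Y) ⊓ LinearMap.ker f = X ⊓ LinearMap.ker f ⊔ Y ⊓ LinearMap.ker f := by
  refine le_antisymm ?_
    (le_inf (sup_le_sup inf_le_left inf_le_left) (sup_le inf_le_right inf_le_right))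
  rintro _ ⟨hw, hker⟩
  obtain ⟨x, hx, y, hy, rfl⟩ := Submodule.mem_sup.mp hw
  have hfx : f x = -f y := eq_neg_of_add_eq_zero_left (by simpa using hker)
  have hfx0 : f x = 0 := (Submodule.disjoint_def.mp h) _ (Submodule.mem_map_of_mem hx)
    (hfx ▸ Submodule.neg_mem _ (Submodule.mem_map_of_mem hy))
  have hfy0 : f y = 0 := by rw [hfx0] at hfx; exact neg_eq_zero.mp hfx.symm
  exact Submodule.add_mem_sup ⟨hx, hfx0⟩ ⟨hy, hfy0⟩

theorem Ideal.exists_mem_forall_sub_mul_mem {R : Type*} [CommRing R] (I A : Ideal R)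
    [IsSemisimpleRing (R ⧸ I)] : ∃ u ∈ A, ∀ r ∈ A, r - r * u ∈ I := by
  obtain ⟨e, he, hAe⟩ := IsSemisimpleRing.ideal_eq_span_idempotent (A.map (Ideal.Quotient.mk I))
  obtain ⟨u, huA, rfl⟩ := (Ideal.mem_map_iff_of_surjective _ Ideal.Quotient.mk_surjective).mp
    (hAe ▸ Ideal.mem_span_singleton_self _)
  refine ⟨u, huA, fun r hr => Ideal.Quotient.eq_zero_iff_mem.mp ?_⟩
  obtain ⟨c, hc⟩ := Ideal.mem_span_singleton'.mp (hAe ▸ Ideal.mem_map_of_mem _ hr)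
  rw [map_sub, map_mul, ← hc, mul_assoc, he.eq, sub_self]

section SquareZero

variable {R : Type u} [CommRing R] {M : Type v} [AddCommGroup M] [Module R M] {t : R}

theorem Submodule.map_lsmul_le (X : Submodule R M) : X.map (LinearMap.lsmul R M t) ≤ X := by
  rintro _ ⟨y, hy, rfl⟩
  exact X.smul_mem t hy

theorem range_lsmul_le_ker_lsmul (ht : t * t = 0) :
    LinearMap.range (LinearMap.lsmul R M t) ≤ LinearMap.ker (LinearMap.lsmul R M t) := by
  rintro _ ⟨y, rfl⟩
  simp [smul_smul, ht]

theorem inf_ker_lsmul_ne_bot (ht : t * t = 0) {K : Submodule R M} (hK : K ≠ ⊥) :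
    K ⊓ LinearMap.ker (LinearMap.lsmul R M t) ≠ ⊥ := by
  obtain ⟨z, hzK, hz0⟩ := Submodule.exists_mem_ne_zero_of_ne_bot hK
  by_cases hz : t • z = 0
  · exact Submodule.ne_bot_iff _ |>.mpr ⟨z, ⟨hzK, hz⟩, hz0⟩
  · refine Submodule.ne_bot_iff _ |>.mpr ⟨t • z, ⟨K.smul_mem t hzK, ?_⟩, hz⟩
    simp [smul_smul, ht]

theorem disjoint_of_disjoint_inf_ker_lsmul (ht : t * t = 0) {D D' : Submodule R M}
    (h : Disjoint (D ⊓ LinearMap.ker (LinearMap.lsmul R M t))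
      (D' ⊓ LinearMap.ker (LinearMap.lsmul R M t))) : Disjoint D D' := by
  by_contra hDD'
  exact inf_ker_lsmul_ne_bot ht (disjoint_iff.not.mp hDD') <| disjoint_self.mp <|
    h.mono (inf_le_inf_right _ inf_le_left) (inf_le_inf_right _ inf_le_right)

theorem isEssentialIn_of_inf_ker_lsmul_le (ht : t * t = 0) {N D : Submodule R M} (hND : N ≤ D)
    (hD : D ⊓ LinearMap.ker (LinearMap.lsmul R M t) ≤ N) : IsEssentialIn R N D := by
  refine ⟨hND, fun K hKD hK hNK => inf_ker_lsmul_ne_bot ht hK (eq_bot_iff.mpr ?_)⟩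
  rw [← hNK]
  exact le_inf ((inf_le_inf_right _ hKD).trans hD) inf_le_left

theorem isSemisimpleModule_of_le_ker_lsmul [IsSemisimpleRing (R ⧸ Ideal.span {t})]
    {Q : Submodule R M} (hQ : Q ≤ LinearMap.ker (LinearMap.lsmul R M t)) :
    IsSemisimpleModule R Q := by
  have htors : Module.IsTorsionBySet R Q (Ideal.span {t} : Set R) :=
    (Module.isTorsionBySet_span_singleton_iff t).mpr fun x => Subtype.ext (hQ x.2)
  let := htors.module
  exact htors.isSemisimpleModule_iff.mp inferInstance

theorem exists_le_inf_eq_bot_sup_eq_of_le_ker_lsmul [IsSemisimpleRing (R ⧸ Ideal.span {t})]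
    {P Q : Submodule R M} (hPQ : P ≤ Q) (hQ : Q ≤ LinearMap.ker (LinearMap.lsmul R M t)) :
    ∃ C ≤ Q, P ⊓ C = ⊥ ∧ P ⊔ C = Q := by
  have := isSemisimpleModule_of_le_ker_lsmul hQ
  have : ComplementedLattice (Set.Iic Q) := Q.mapIic.complementedLattice_iff.mp inferInstance
  exact Set.Iic.complementedLattice_iff.mp this P hPQ

theorem exists_smul_eq_and_span_inf_ker_lsmul_le [IsSemisimpleRing (R ⧸ Ideal.span {t})]
    {p : M} (hp : p ∈ LinearMap.range (LinearMap.lsmul R M t)) :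
    ∃ x : M, t • x = p ∧ (R ∙ x) ⊓ LinearMap.ker (LinearMap.lsmul R M t) ≤ R ∙ p := by
  obtain ⟨x₀, hx₀⟩ := hp
  rw [LinearMap.lsmul_apply] at hx₀
  obtain ⟨u, hu, hsub⟩ := Ideal.exists_mem_forall_sub_mul_mem (Ideal.span {t})
    (LinearMap.ker (LinearMap.toSpanSingleton R M p))
  have hup : u • p = 0 := hu
  have htx : t • (x₀ - u • x₀) = p := by rw [smul_sub, hx₀, smul_comm, hx₀, hup, sub_zero]
  refine ⟨x₀ - u • x₀, htx, ?_⟩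
  rintro _ ⟨hw, hker⟩
  obtain ⟨r, rfl⟩ := Submodule.mem_span_singleton.mp hw
  have hrp : r • p = 0 := by
    rw [← htx, smul_comm]
    exact hker
  obtain ⟨c, hc⟩ := Ideal.mem_span_singleton'.mp (hsub r hrp)
  exact Submodule.mem_span_singleton.mpr
    ⟨c, by linear_combination (norm := module) -c • hx₀ + hc • x₀⟩

theorem exists_map_lsmul_eq_and_inf_ker_eq (ht : t * t = 0)
    [IsSemisimpleRing (R ⧸ Ideal.span {t})] {P : Submodule R M}
    (hP : P ≤ LinearMap.range (LinearMap.lsmul R M t)) :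
    ∃ X : Submodule R M, X.map (LinearMap.lsmul R M t) = P ∧
      X ⊓ LinearMap.ker (LinearMap.lsmul R M t) = P := by
  set τ := LinearMap.lsmul R M t
  have hPS : P ≤ LinearMap.ker τ := hP.trans (range_lsmul_le_ker_lsmul ht)
  let 𝒮 : Set (Submodule R M) := {X | X.map τ ≤ P ∧ X ⊓ LinearMap.ker τ ≤ P}
  have hchain : ∀ c ⊆ 𝒮, IsChain (· ≤ ·) c → ∀ y ∈ c, ∃ ub ∈ 𝒮, ∀ z ∈ c, z ≤ ub := by
    refine fun c hc hchain y hy => ⟨sSup c, ⟨?_, ?_⟩, fun z hz => le_sSup hz⟩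
    · exact Submodule.map_le_iff_le_comap.mpr
        (sSup_le fun X hX => Submodule.map_le_iff_le_comap.mp (hc hX).1)
    · rintro z ⟨hz, hzker⟩
      obtain ⟨X, hXc, hzX⟩ := (Submodule.mem_sSup_of_directed ⟨y, hy⟩ hchain.directedOn).mp hz
      exact (hc hXc).2 ⟨hzX, hzker⟩
  obtain ⟨X, -, hX⟩ := zorn_le_nonempty₀ 𝒮 hchain ⊥ ⟨by simp, by simp⟩
  -- if `τ X ≠ P`, a lift of a nonzero element of a complement of `τ X` in `P` enlarges `X` in `𝒮`
  have hmap : X.map τ = P := by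
    by_contra hne
    obtain ⟨C, hCP, hdisj, hsup⟩ := exists_le_inf_eq_bot_sup_eq_of_le_ker_lsmul hX.prop.1 hPS
    obtain ⟨z, hzC, hz0⟩ := Submodule.exists_mem_ne_zero_of_ne_bot (p := C) fun h =>
      hne (by rwa [h, sup_bot_eq] at hsup)
    have hzP : R ∙ z ≤ P := (Submodule.span_singleton_le_iff_mem _ _).mpr (hCP hzC)
    obtain ⟨x, hxz, hx⟩ := exists_smul_eq_and_span_inf_ker_lsmul_le (hP (hCP hzC))
    have hmapx : (R ∙ x).map τ = R ∙ z := by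
      rw [Submodule.map_span, Set.image_singleton, LinearMap.lsmul_apply, hxz]
    have hdisjx : Disjoint (X.map τ) ((R ∙ x).map τ) := by
      rw [hmapx]
      exact (disjoint_iff.mpr hdisj).mono_right ((Submodule.span_singleton_le_iff_mem _ _).mpr hzC)
    have hX' : X ⊔ (R ∙ x) ∈ 𝒮 := by
      refine ⟨?_, ?_⟩
      · rw [Submodule.map_sup, hmapx]
        exact sup_le hX.prop.1 hzP
      · rw [Submodule.sup_inf_ker_eq_of_disjoint_map τ hdisjx]
        exact sup_le hX.prop.2 (hx.trans hzP)
    have hxX : x ∈ X := hX.2 hX' le_sup_left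
      (Submodule.mem_sup_right (Submodule.mem_span_singleton_self x))
    exact hz0 (Submodule.disjoint_def.mp (disjoint_iff.mpr hdisj) z ⟨x, hxX, hxz⟩ hzC)
  exact ⟨X, hmap, le_antisymm hX.prop.2 (le_inf (hmap ▸ X.map_lsmul_le) hPS)⟩

theorem isSummand_of_inf_range_lsmul_eq_map (ht : t * t = 0)
    [IsSemisimpleRing (R ⧸ Ideal.span {t})] {D : Submodule R M}
    (hD : D ⊓ LinearMap.range (LinearMap.lsmul R M t) = D.map (LinearMap.lsmul R M t)) :
    IsSummand R D := by
  set τ := LinearMap.lsmul R M t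
  have hTS : LinearMap.range τ ≤ LinearMap.ker τ := range_lsmul_le_ker_lsmul ht
  obtain ⟨W, hWT, hDW, hDWT⟩ :=
    exists_le_inf_eq_bot_sup_eq_of_le_ker_lsmul (inf_le_right : D ⊓ LinearMap.range τ ≤ _) hTS
  obtain ⟨Y, hYW, hYS⟩ := exists_map_lsmul_eq_and_inf_ker_eq ht hWT
  obtain ⟨U, hUS, hDWU, hDWUS⟩ := exists_le_inf_eq_bot_sup_eq_of_le_ker_lsmul
    (sup_le inf_le_right (hWT.trans hTS) : D ⊓ LinearMap.ker τ ⊔ W ≤ _) le_rfl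
  refine ⟨Y ⊔ U, disjoint_of_disjoint_inf_ker_lsmul ht ?_, codisjoint_iff.mpr (eq_top_iff.mpr ?_)⟩
  · have hUτ : U.map τ = ⊥ := LinearMap.le_ker_iff_map.mp hUS
    rw [Submodule.sup_inf_ker_eq_of_disjoint_map τ (by rw [hUτ]; exact disjoint_bot_right), hYS,
      inf_eq_left.mpr hUS]
    refine Disjoint.disjoint_sup_right_of_disjoint_sup_left ?_ (disjoint_iff.mpr hDWU)
    rw [disjoint_iff, eq_bot_iff, ← hDW]
    exact le_inf (le_inf (inf_le_left.trans inf_le_left) (inf_le_right.trans hWT)) inf_le_right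
  · -- `M = τ⁻¹(τ D + τ Y)`, and the kernel of `τ` is `(D ∩ ker τ) ⊕ W ⊕ U` with `W = τ Y ≤ Y`
    have hWY : W ≤ Y := hYW ▸ Y.map_lsmul_le
    calc ⊤ ≤ ((D ⊔ Y).map τ).comap τ := by
          rw [Submodule.map_sup, hYW, ← hD, hDWT]
          exact fun x _ => LinearMap.mem_range_self τ x
      _ = D ⊔ Y ⊔ LinearMap.ker τ := Submodule.comap_map_eq _ _
      _ ≤ D ⊔ (Y ⊔ U) := by
          rw [← hDWUS]
          simp only [sup_le_iff]
          exact ⟨⟨le_sup_left, le_sup_of_le_right le_sup_left⟩, ⟨inf_le_left.trans le_sup_left,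
            le_sup_of_le_right (hWY.trans le_sup_left)⟩, le_sup_of_le_right le_sup_right⟩

theorem exists_le_inf_ker_lsmul_le_inf_range_eq_map (ht : t * t = 0)
    [IsSemisimpleRing (R ⧸ Ideal.span {t})] (N : Submodule R M) :
    ∃ D : Submodule R M, N ≤ D ∧ D ⊓ LinearMap.ker (LinearMap.lsmul R M t) ≤ N ∧
      D ⊓ LinearMap.range (LinearMap.lsmul R M t) = D.map (LinearMap.lsmul R M t) := by
  set τ := LinearMap.lsmul R M t
  have hTS : LinearMap.range τ ≤ LinearMap.ker τ := range_lsmul_le_ker_lsmul ht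
  have hB : N.map τ ≤ N ⊓ LinearMap.ker τ ⊓ LinearMap.range τ :=
    le_inf (le_inf N.map_lsmul_le (LinearMap.map_le_range.trans hTS)) LinearMap.map_le_range
  obtain ⟨P, hP, hBP, hBPAT⟩ :=
    exists_le_inf_eq_bot_sup_eq_of_le_ker_lsmul hB (inf_le_right.trans hTS)
  obtain ⟨X, hXP, hXS⟩ := exists_map_lsmul_eq_and_inf_ker_eq ht (hP.trans inf_le_right)
  have hker : (N ⊔ X) ⊓ LinearMap.ker τ ≤ N := by
    rw [Submodule.sup_inf_ker_eq_of_disjoint_map τ (by rw [hXP]; exact disjoint_iff.mpr hBP), hXS]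
    exact sup_le inf_le_left (hP.trans (inf_le_left.trans inf_le_left))
  refine ⟨N ⊔ X, le_sup_left, hker,
    le_antisymm ?_ (le_inf (N ⊔ X).map_lsmul_le LinearMap.map_le_range)⟩
  rw [Submodule.map_sup, hXP, hBPAT]
  exact le_inf (le_inf ((inf_le_inf_left _ hTS).trans hker) (inf_le_right.trans hTS)) inf_le_right

theorem isC1Module_of_mul_self_eq_zero (ht : t * t = 0) [IsSemisimpleRing (R ⧸ Ideal.span {t})] :
    IsC1Module R M := fun N => by
  obtain ⟨D, hND, hDS, hDT⟩ := exists_le_inf_ker_lsmul_le_inf_range_eq_map ht N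
  exact ⟨D, isSummand_of_inf_range_lsmul_eq_map ht hDT,
    isEssentialIn_of_inf_ker_lsmul_le ht hND hDS⟩

end SquareZero

open IsLocalRing in
theorem maximalIdeal_mul_self_eq_bot_of_compositionLengthLE2 (A : Type*) [CommRing A]
    [IsLocalRing A] [IsArtinianRing A] (h : CompositionLengthLE2 A A) :
    maximalIdeal A * maximalIdeal A = ⊥ := by
  have hm : maximalIdeal A = ⊥ ∨ IsAtom (maximalIdeal A) := by
    obtain ⟨N, hN, hquot | rfl⟩ := h
    · obtain rfl : N = maximalIdeal A :=
        eq_maximalIdeal (Ideal.isMaximal_def.mpr (isSimpleModule_iff_isCoatom.mp hquot))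
      exact hN.symm.imp_right isSimpleModule_iff_isAtom.mp
    · have hA := hN.resolve_right top_ne_bot
      exact Or.inl <| ((isSimpleModule_iff_isAtom.mp hA).le_iff.mp le_top).resolve_right
        (maximalIdeal.isMaximal A).ne_top
  refine hm.elim (fun hm => by rw [hm, Ideal.mul_bot]) fun hm => ?_
  -- `m² = m` is impossible: `m` is nilpotent and nonzero
  refine (hm.le_iff.mp Ideal.mul_le_left).resolve_right fun hidem => hm.1 ?_
  obtain ⟨n, hn⟩ := exists_maximalIdeal_pow_le_of_isArtinianRing_quotient (⊥ : Ideal A)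
  rw [← IsIdempotentElem.pow_succ_eq n hidem, pow_succ]
  exact le_bot_iff.mp (Ideal.mul_le_left.trans hn)

theorem exists_mul_self_eq_zero_and_isMaximal_span (A : Type*) [CommRing A]
    [IsLocalRing A] [IsArtinianRing A] [IsPrincipalIdealRing A] (h : CompositionLengthLE2 A A) :
    ∃ a : A, a * a = 0 ∧ (Ideal.span {a}).IsMaximal := by
  obtain ⟨a, ha⟩ := (IsPrincipalIdealRing.principal (IsLocalRing.maximalIdeal A)).principal
  replace ha : Ideal.span {a} = IsLocalRing.maximalIdeal A := ha.symm
  have hmem : a ∈ IsLocalRing.maximalIdeal A := ha ▸ Ideal.mem_span_singleton_self a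
  have hsq := Ideal.mul_mem_mul hmem hmem
  rw [maximalIdeal_mul_self_eq_bot_of_compositionLengthLE2 A h] at hsq
  exact ⟨a, hsq, ha ▸ IsLocalRing.maximalIdeal.isMaximal A⟩

theorem isSemisimpleRing_pi_quotient_span_singleton {ι : Type*} [Finite ι] {A : ι → Type*}
    [∀ i, CommRing (A i)] (a : ∀ i, A i) (ha : ∀ i, (Ideal.span {a i}).IsMaximal) :
    IsSemisimpleRing ((∀ i, A i) ⧸ Ideal.span {a}) := by
  let := fun i => Ideal.Quotient.field (Ideal.span {a i})
  let φ : (∀ i, A i) →+* ∀ i, A i ⧸ Ideal.span {a i} :=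
    RingHom.pi fun i => (Ideal.Quotient.mk _).comp (Pi.evalRingHom A i)
  have hφ : Function.Surjective φ := fun y => by
    choose x hx using fun i => Ideal.Quotient.mk_surjective (y i)
    exact ⟨x, funext hx⟩
  have hker : RingHom.ker φ = Ideal.span {a} := by
    ext r
    simp [φ, ← Ideal.pi_span, Ideal.mem_pi, funext_iff, Ideal.Quotient.eq_zero_iff_mem]
  exact ((Ideal.quotEquivOfEq hker.symm).trans
    (RingHom.quotientKerEquivOfSurjective hφ)).symm.isSemisimpleRing

theorem stmt_15 (R : Type u) [CommRing R]
    (h : ∃ (m : ℕ) (Ri : Fin m → Type u) (inst : ∀ i, CommRing (Ri i)),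
      letI := inst
      Nonempty (R ≃+* ∀ i, Ri i) ∧
        ∀ i, IsLocalRing (Ri i) ∧ IsArtinianRing (Ri i) ∧ IsPrincipalIdealRing (Ri i) ∧
          CompositionLengthLE2 (Ri i) (Ri i)) :
    ∀ (M : Type u) [AddCommGroup M] [Module R M], IsC1Module R M := by
  intro M _ _
  obtain ⟨m, Ri, _, ⟨e⟩, hRi⟩ := h
  choose a ha hspan using fun i => by
    obtain ⟨_, _, _, hlen⟩ := hRi i
    exact exists_mul_self_eq_zero_and_isMaximal_span (Ri i) hlen
  have := isSemisimpleRing_pi_quotient_span_singleton a hspan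
  have : IsSemisimpleRing (R ⧸ Ideal.span {e.symm a}) :=
    (Ideal.quotientEquiv _ (Ideal.span {a}) e (by simp [Ideal.map_span])).symm.isSemisimpleRing
  have ht : e.symm a * e.symm a = 0 := by rw [← map_mul, show a * a = 0 from funext ha, map_zero]
  exact isC1Module_of_mul_self_eq_zero ht
end

section
/- Let R be a ring and M a right R-module. If the module M ⊕ M is a C3-module, then M is a C2-module. -/
universe u v

open CategoryTheory

/-!
Let `e : A ≃ B` with `B ⊕ B' = M`. In `M × M` the graph `{(a, e a) | a ∈ A}` is a direct summand,
with complement `M × B'`, and it meets the summand `0 × M` trivially. By C3 their sum `A × M` is a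
direct summand of `M × M`; restricting the projection onto `A × M` to `M × 0` and reading off the
first coordinate gives a projection of `M` onto `A`.
-/

open Submodule LinearMap

section Summands

variable {R : Type*} [Ring R] {M N P : Type*} [AddCommGroup M] [Module R M]
  [AddCommGroup N] [Module R N] [AddCommGroup P] [Module R P]

theorem IsCompl.prod {p p' : Submodule R M} {q q' : Submodule R N} (hp : IsCompl p p')
    (hq : IsCompl q q') : IsCompl (p.prod q) (p'.prod q') := by
  constructor
  · rw [disjoint_iff, prod_inf_prod, hp.inf_eq_bot, hq.inf_eq_bot, prod_bot]
  · rw [codisjoint_iff, prod_sup_prod, hp.sup_eq_top, hq.sup_eq_top, prod_top]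

theorem IsSummand.of_retract {T : Submodule R M} {S : Submodule R N} (hT : IsSummand R T)
    (i : N →ₗ[R] M) (p : M →ₗ[R] N) (hi : ∀ y ∈ S, i y ∈ T) (hp : ∀ x ∈ T, p x ∈ S)
    (hpi : ∀ y ∈ S, p (i y) = y) : IsSummand R S := by
  obtain ⟨T', hT'⟩ := hT
  have hproj : IsProj S (p ∘ₗ T.projection T' hT' ∘ₗ i) :=
    ⟨fun y => hp _ (projection_apply_mem hT' _), fun y hy => by
      simp [projection_apply_of_mem_left hT' (hi y hy), hpi y hy]⟩
  exact ⟨_, hproj.isCompl⟩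

theorem IsSummand.of_prod_top {S : Submodule R M} (h : IsSummand R (S.prod (⊤ : Submodule R N))) :
    IsSummand R S :=
  h.of_retract (inl R M N) (fst R M N) (fun _ hy => ⟨hy, trivial⟩) (fun _ hx => hx.1)
    (fun _ _ => rfl)

theorem isCompl_range_prod_prod_top (g : P →ₗ[R] M) {f : P →ₗ[R] N} (hf : Function.Injective f)
    {S : Submodule R N} (hS : IsCompl (range f) S) :
    IsCompl (range (g.prod f)) ((⊤ : Submodule R M).prod S) := by
  constructor
  · rw [disjoint_iff, eq_bot_iff]
    rintro _ ⟨⟨z, rfl⟩, -, hz⟩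
    have : f z = 0 := hS.disjoint.le_bot ⟨mem_range_self f z, hz⟩
    simp [(map_eq_zero_iff f hf).1 this]
  · rw [codisjoint_iff, eq_top_iff]
    rintro ⟨m, n⟩ -
    obtain ⟨_, ⟨z, rfl⟩, s, hs, rfl⟩ := mem_sup.1 (hS.sup_eq_top ▸ mem_top : n ∈ range f ⊔ S)
    exact mem_sup.2 ⟨_, mem_range_self _ z, (m - g z, s), ⟨trivial, hs⟩, by simp⟩

theorem disjoint_range_prod_bot_prod_top {g : P →ₗ[R] M} (hg : Function.Injective g)
    (f : P →ₗ[R] N) : Disjoint (range (g.prod f)) ((⊥ : Submodule R M).prod ⊤) := by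
  rw [disjoint_iff, eq_bot_iff]
  rintro _ ⟨⟨z, rfl⟩, hz, -⟩
  simp [(map_eq_zero_iff g hg).1 ((mem_bot R).1 hz)]

theorem range_prod_sup_bot_prod_top (g : P →ₗ[R] M) (f : P →ₗ[R] N) :
    range (g.prod f) ⊔ (⊥ : Submodule R M).prod ⊤ = (range g).prod ⊤ := by
  refine le_antisymm (sup_le ?_ ?_) ?_
  · rintro _ ⟨z, rfl⟩
    exact ⟨mem_range_self g z, trivial⟩
  · exact prod_mono bot_le le_rfl
  · rintro ⟨_, n⟩ ⟨⟨z, rfl⟩, -⟩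
    exact mem_sup.2 ⟨_, mem_range_self _ z, (0, n - f z), ⟨rfl, trivial⟩, by simp⟩

end Summands

theorem stmt_18 (R : Type u) [Ring R] (M : Type v) [AddCommGroup M] [Module R M]
    (h : IsC3Module R (M × M)) : IsC2Module R M := by
  rintro A B ⟨B', hB'⟩ ⟨e⟩
  set φ : A →ₗ[R] M := B.subtype ∘ₗ e.toLinearMap
  have hφ : Function.Injective φ := B.injective_subtype.comp e.injective
  have hrange : range φ = B := by
    rw [range_comp, LinearEquiv.range, Submodule.map_top, range_subtype]
  have hgraph : IsSummand R (range (A.subtype.prod φ)) :=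
    ⟨_, isCompl_range_prod_prod_top A.subtype hφ (hrange ▸ hB')⟩
  have hsum := h _ _ hgraph ⟨_, isCompl_bot_top.prod isCompl_top_bot⟩
    (disjoint_range_prod_bot_prod_top A.injective_subtype φ).eq_bot
  rw [range_prod_sup_bot_prod_top, range_subtype] at hsum
  exact hsum.of_prod_top
end

section
/- Let R be a commutative integral domain that is not a field. Then R, as a module over itself, is a C3-module but not a C2-module. -/
universe u v

open CategoryTheory

/-! A complement `B` of a summand `A` of `R` splits `1 = e + f` with `e ∈ A`, `f ∈ B` and
`e * f ∈ A ⊓ B = 0`, so `A = (e)` with `e` idempotent. In a domain the only idempotents are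
`0` and `1`, so `R` is indecomposable, which makes C3 automatic. On the other hand, for a
nonzero nonunit `a` the ideal `(a)` is isomorphic to `R` but is neither `0` nor `R`. -/

section Summands

variable {R : Type u} [CommRing R]

theorem IsSummand.exists_isIdempotentElem_eq_span {A : Submodule R R} (hA : IsSummand R A) :
    ∃ e, IsIdempotentElem e ∧ A = Ideal.span {e} := by
  obtain ⟨B, hAB⟩ := hA
  obtain ⟨e, he, f, hf, hef⟩ : ∃ e ∈ A, ∃ f ∈ B, e + f = 1 :=
    Submodule.mem_sup.mp (hAB.sup_eq_top ▸ Submodule.mem_top)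
  have mul_f_eq_zero : ∀ x ∈ A, x * f = 0 := fun x hx => by
    have : x * f ∈ A ⊓ B := ⟨mul_comm f x ▸ A.smul_mem f hx, B.smul_mem x hf⟩
    rwa [hAB.inf_eq_bot, Submodule.mem_bot] at this
  have mul_e_eq_self : ∀ x ∈ A, x * e = x := fun x hx => by
    rw [← add_zero (x * e), ← mul_f_eq_zero x hx, ← mul_add, hef, mul_one]
  refine ⟨e, mul_e_eq_self e he, le_antisymm (fun x hx => ?_) ?_⟩
  · exact Ideal.mem_span_singleton'.mpr ⟨x, mul_e_eq_self x hx⟩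
  · exact (Ideal.span_singleton_le_iff_mem A).mpr he

theorem IsSummand.eq_bot_or_eq_top [NoZeroDivisors R] {A : Submodule R R} (hA : IsSummand R A) :
    A = ⊥ ∨ A = ⊤ := by
  obtain ⟨e, he, rfl⟩ := hA.exists_isIdempotentElem_eq_span
  rcases IsIdempotentElem.iff_eq_zero_or_one.mp he with rfl | rfl
  · exact Or.inl (Ideal.span_singleton_eq_bot.mpr rfl)
  · exact Or.inr Ideal.span_singleton_one

end Summands

theorem isC3Module_of_forall_isSummand {R : Type u} [Ring R] {M : Type v} [AddCommGroup M]
    [Module R M] (h : ∀ A : Submodule R M, IsSummand R A → A = ⊥ ∨ A = ⊤) : IsC3Module R M := by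
  intro A B hA hB hAB
  rcases h A hA with rfl | rfl
  · rwa [bot_sup_eq]
  · rw [top_sup_eq]
    exact ⟨⊥, isCompl_top_bot⟩

theorem not_isC2Module_self {R : Type u} [CommRing R] [IsDomain R] (h : ¬IsField R) :
    ¬IsC2Module R R := by
  intro hC2
  obtain ⟨a, ha, ha_unit⟩ := Ring.exists_not_isUnit_of_not_isField h
  have hsummand : IsSummand R (R ∙ a) := hC2 _ ⊤ ⟨⊥, isCompl_top_bot⟩
    ⟨(LinearEquiv.toSpanNonzeroSingleton R R a ha).symm.trans Submodule.topEquiv.symm⟩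
  rcases hsummand.eq_bot_or_eq_top with hbot | htop
  · exact ha (Submodule.span_singleton_eq_bot.mp hbot)
  · exact ha_unit (Ideal.span_singleton_eq_top.mp htop)

theorem stmt_19 (R : Type u) [CommRing R] [IsDomain R] (h : ¬ IsField R) :
    IsC3Module R R ∧ ¬ IsC2Module R R :=
  ⟨isC3Module_of_forall_isSummand fun _ hA => hA.eq_bot_or_eq_top, not_isC2Module_self h⟩
end
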